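/- For the 1-forms ω¹ = dy - χ₁(y)dx, ω² = dx - χ₁(x)dy, ω³ = dt - (χ̄₁(t-3/8) + χ̄₁(t-5/8))dy on [0,1] × T², one has ω¹ ∧ dω¹ = 0, ω² ∧ dω² = 0, ω³ ∧ dω³ = 0, and ω¹ ∧ ω² ∧ ω³ is nowhere zero, provided |χ₁| < 1 pointwise and χ̄₁ is an arbitrary smooth function. -/

import Mathlib

/-! STATEMENT 11: For the 1-forms `ω¹ = dy - χ₁(y)dx`, `ω² = dx - χ₁(x)dy`,
`ω³ = dt - (χ̄₁(t-3/8) + χ̄₁(t-5/8))dy` on `W = [0,1] × T²` with coordinates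
`(t,x,y)` (the forms are defined on the cover `ℝ³`), provided `|χ₁| < 1`
pointwise and `χ̄₁` is an arbitrary smooth function, one has
`ωⁱ ∧ dωⁱ = 0` for `i = 1,2,3` (each kernel is an involutive plane field,
spanned by two explicit vector fields whose Lie bracket lies in the kernel),
and `ω¹ ∧ ω² ∧ ω³` is nowhere zero (the three kernels intersect trivially at
every point, i.e. they form a total plane field). -/

/-- Coordinates `(t,x,y)`. -/
abbrev V3 : Type := ℝ × ℝ × ℝ

/-- The 1-form `dt`. -/
noncomputable def formDt : V3 →ₗ[ℝ] ℝ := LinearMap.fst ℝ ℝ (ℝ × ℝ)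

/-- The 1-form `dx`. -/
noncomputable def formDx : V3 →ₗ[ℝ] ℝ :=
  (LinearMap.fst ℝ ℝ ℝ).comp (LinearMap.snd ℝ ℝ (ℝ × ℝ))

/-- The 1-form `dy`. -/
noncomputable def formDy : V3 →ₗ[ℝ] ℝ :=
  (LinearMap.snd ℝ ℝ ℝ).comp (LinearMap.snd ℝ ℝ (ℝ × ℝ))

/-- The Lie bracket of two vector fields on `ℝ³`, `[X,Y] = DY·X - DX·Y`. -/
noncomputable def lieBracket (X Y : V3 → V3) : V3 → V3 :=
  fun p => fderiv ℝ Y p (X p) - fderiv ℝ X p (Y p)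

/-- `ω¹ = dy - χ₁(y) dx` at `p = (t,x,y)`. -/
noncomputable def omega1 (χ₁ : ℝ → ℝ) (p : V3) : V3 →ₗ[ℝ] ℝ :=
  formDy - χ₁ p.2.2 • formDx

/-- `ω² = dx - χ₁(x) dy` at `p = (t,x,y)`. -/
noncomputable def omega2 (χ₁ : ℝ → ℝ) (p : V3) : V3 →ₗ[ℝ] ℝ :=
  formDx - χ₁ p.2.1 • formDy

/-- `ω³ = dt - (χ̄₁(t-3/8) + χ̄₁(t-5/8)) dy` at `p = (t,x,y)`. -/
noncomputable def omega3 (χb : ℝ → ℝ) (p : V3) : V3 →ₗ[ℝ] ℝ :=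
  formDt - (χb (p.1 - 3/8) + χb (p.1 - 5/8)) • formDy

lemma ker1 (c : ℝ) : LinearMap.ker (formDy - c • formDx) =
    Submodule.span ℝ {((1,0,0):V3), ((0,1,c):V3)} := by
  ext v
  simp only [LinearMap.mem_ker, Submodule.mem_span_pair, LinearMap.sub_apply,
    LinearMap.smul_apply, formDx, formDy, LinearMap.comp_apply,
    LinearMap.fst_apply, LinearMap.snd_apply, smul_eq_mul, sub_eq_zero]
  constructor
  · intro h
    exact ⟨v.1, v.2.1, by simp [Prod.ext_iff, Prod.smul_mk, h.symm, mul_comm]⟩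
  · rintro ⟨m, n, rfl⟩
    simp [Prod.smul_mk]; ring

lemma ker2 (c : ℝ) : LinearMap.ker (formDx - c • formDy) =
    Submodule.span ℝ {((1,0,0):V3), ((0,c,1):V3)} := by
  ext v
  simp only [LinearMap.mem_ker, Submodule.mem_span_pair, LinearMap.sub_apply,
    LinearMap.smul_apply, formDx, formDy, LinearMap.comp_apply,
    LinearMap.fst_apply, LinearMap.snd_apply, smul_eq_mul, sub_eq_zero]
  constructor
  · intro h
    exact ⟨v.1, v.2.2, by simp [Prod.ext_iff, Prod.smul_mk, h.symm, mul_comm]⟩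
  · rintro ⟨m, n, rfl⟩
    simp [Prod.smul_mk]; ring

lemma ker3 (c : ℝ) : LinearMap.ker (formDt - c • formDy) =
    Submodule.span ℝ {((0,1,0):V3), ((c,0,1):V3)} := by
  ext v
  simp only [LinearMap.mem_ker, Submodule.mem_span_pair, LinearMap.sub_apply,
    LinearMap.smul_apply, formDt, formDx, formDy, LinearMap.comp_apply,
    LinearMap.fst_apply, LinearMap.snd_apply, smul_eq_mul, sub_eq_zero]
  constructor
  · intro h
    exact ⟨v.2.1, v.2.2, by simp [Prod.ext_iff, Prod.smul_mk, h.symm, mul_comm]⟩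
  · rintro ⟨m, n, rfl⟩
    simp [Prod.smul_mk]; ring

noncomputable def piT : V3 →L[ℝ] ℝ := ContinuousLinearMap.fst ℝ ℝ (ℝ × ℝ)
noncomputable def piX : V3 →L[ℝ] ℝ :=
  (ContinuousLinearMap.fst ℝ ℝ ℝ).comp (ContinuousLinearMap.snd ℝ ℝ (ℝ × ℝ))
noncomputable def piY : V3 →L[ℝ] ℝ :=
  (ContinuousLinearMap.snd ℝ ℝ ℝ).comp (ContinuousLinearMap.snd ℝ ℝ (ℝ × ℝ))

lemma fderiv_apply1 {f : ℝ → ℝ} (hf : Differentiable ℝ f) (p : V3) :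
    fderiv ℝ (fun q : V3 => ((0:ℝ), (1:ℝ), f q.2.2)) p (1,0,0) = 0 := by
  have hc : HasFDerivAt (fun q : V3 => f q.2.2)
      ((fderiv ℝ f p.2.2).comp piY) p :=
    (hf p.2.2).hasFDerivAt.comp p (piY.hasFDerivAt)
  have h : HasFDerivAt (fun q : V3 => ((0:ℝ), (1:ℝ), f q.2.2))
      ((0 : V3 →L[ℝ] ℝ).prod (((0 : V3 →L[ℝ] ℝ)).prod ((fderiv ℝ f p.2.2).comp piY))) p :=
    HasFDerivAt.prodMk (hasFDerivAt_const _ _) (HasFDerivAt.prodMk (hasFDerivAt_const _ _) hc)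
  rw [h.fderiv]
  simp [piY, Prod.ext_iff]

lemma fderiv_apply2 {f : ℝ → ℝ} (hf : Differentiable ℝ f) (p : V3) :
    fderiv ℝ (fun q : V3 => ((0:ℝ), f q.2.1, (1:ℝ))) p (1,0,0) = 0 := by
  have hc : HasFDerivAt (fun q : V3 => f q.2.1)
      ((fderiv ℝ f p.2.1).comp piX) p :=
    (hf p.2.1).hasFDerivAt.comp p (piX.hasFDerivAt)
  have h : HasFDerivAt (fun q : V3 => ((0:ℝ), f q.2.1, (1:ℝ)))
      ((0 : V3 →L[ℝ] ℝ).prod (((fderiv ℝ f p.2.1).comp piX).prod (0 : V3 →L[ℝ] ℝ))) p :=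
    HasFDerivAt.prodMk (hasFDerivAt_const _ _) (HasFDerivAt.prodMk hc (hasFDerivAt_const _ _))
  rw [h.fderiv]
  simp [piX, Prod.ext_iff]

lemma fderiv_apply3 {f : ℝ → ℝ} (hf : Differentiable ℝ f) (p : V3) :
    fderiv ℝ (fun q : V3 => (f q.1, (0:ℝ), (1:ℝ))) p (0,1,0) = 0 := by
  have hc : HasFDerivAt (fun q : V3 => f q.1)
      ((fderiv ℝ f p.1).comp piT) p :=
    (hf p.1).hasFDerivAt.comp p (piT.hasFDerivAt)
  have h : HasFDerivAt (fun q : V3 => (f q.1, (0:ℝ), (1:ℝ)))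
      (((fderiv ℝ f p.1).comp piT).prod ((0 : V3 →L[ℝ] ℝ).prod (0 : V3 →L[ℝ] ℝ))) p :=
    HasFDerivAt.prodMk hc (HasFDerivAt.prodMk (hasFDerivAt_const _ _) (hasFDerivAt_const _ _))
  rw [h.fderiv]
  simp [piT, Prod.ext_iff]

theorem stmt11 (χ₁ χb : ℝ → ℝ)
    (h1 : ContDiff ℝ (⊤ : ℕ∞) χ₁) (hbound : ∀ x, |χ₁ x| < 1)
    (h2 : ContDiff ℝ (⊤ : ℕ∞) χb) :
    -- each ωⁱ is a nowhere-zero integrable ("ωⁱ ∧ dωⁱ = 0") 1-form: its kernel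
    -- is the plane spanned by two vector fields whose Lie bracket stays in it
    (∀ p : V3,
      LinearMap.ker (omega1 χ₁ p) =
        Submodule.span ℝ {((1, 0, 0) : V3), ((0, 1, χ₁ p.2.2) : V3)} ∧
      LinearMap.ker (omega2 χ₁ p) =
        Submodule.span ℝ {((1, 0, 0) : V3), ((0, χ₁ p.2.1, 1) : V3)} ∧
      LinearMap.ker (omega3 χb p) =
        Submodule.span ℝ
          {((0, 1, 0) : V3), ((χb (p.1 - 3/8) + χb (p.1 - 5/8), 0, 1) : V3)}) ∧
    (∀ p : V3,
      lieBracket (fun _ => ((1, 0, 0) : V3)) (fun q => ((0, 1, χ₁ q.2.2) : V3)) p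
        ∈ LinearMap.ker (omega1 χ₁ p) ∧
      lieBracket (fun _ => ((1, 0, 0) : V3)) (fun q => ((0, χ₁ q.2.1, 1) : V3)) p
        ∈ LinearMap.ker (omega2 χ₁ p) ∧
      lieBracket (fun _ => ((0, 1, 0) : V3))
          (fun q => ((χb (q.1 - 3/8) + χb (q.1 - 5/8), 0, 1) : V3)) p
        ∈ LinearMap.ker (omega3 χb p)) ∧
    -- `ω¹ ∧ ω² ∧ ω³` is nowhere zero: the kernels intersect trivially
    (∀ p : V3,
      LinearMap.ker (omega1 χ₁ p) ⊓ LinearMap.ker (omega2 χ₁ p) ⊓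
        LinearMap.ker (omega3 χb p) = ⊥) := by
  have hd1 : Differentiable ℝ χ₁ := h1.differentiable (by simp)
  have hd2 : Differentiable ℝ χb := h2.differentiable (by simp)
  have hdf : Differentiable ℝ (fun s : ℝ => χb (s - 3/8) + χb (s - 5/8)) :=
    (hd2.comp (differentiable_id.sub_const _)).add
      (hd2.comp (differentiable_id.sub_const _))
  refine ⟨fun p => ⟨ker1 _, ker2 _, ker3 _⟩, fun p => ?_, fun p => ?_⟩
  · have e1 : lieBracket (fun _ => ((1, 0, 0) : V3))
        (fun q => ((0, 1, χ₁ q.2.2) : V3)) p = 0 := by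
      unfold lieBracket
      rw [fderiv_const_apply, ContinuousLinearMap.zero_apply, sub_zero]
      exact fderiv_apply1 hd1 p
    have e2 : lieBracket (fun _ => ((1, 0, 0) : V3))
        (fun q => ((0, χ₁ q.2.1, 1) : V3)) p = 0 := by
      unfold lieBracket
      rw [fderiv_const_apply, ContinuousLinearMap.zero_apply, sub_zero]
      exact fderiv_apply2 hd1 p
    have e3 : lieBracket (fun _ => ((0, 1, 0) : V3))
        (fun q => ((χb (q.1 - 3/8) + χb (q.1 - 5/8), 0, 1) : V3)) p = 0 := by
      unfold lieBracket
      rw [fderiv_const_apply, ContinuousLinearMap.zero_apply, sub_zero]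
      exact fderiv_apply3 hdf p
    rw [e1, e2, e3]
    exact ⟨Submodule.zero_mem _, Submodule.zero_mem _, Submodule.zero_mem _⟩
  · ext v
    simp only [Submodule.mem_inf, LinearMap.mem_ker, Submodule.mem_bot,
      omega1, omega2, omega3, LinearMap.sub_apply, LinearMap.smul_apply,
      formDt, formDx, formDy, LinearMap.comp_apply, LinearMap.fst_apply,
      LinearMap.snd_apply, smul_eq_mul, sub_eq_zero]
    constructor
    · rintro ⟨⟨ha, hb⟩, hc⟩
      have hy : v.2.2 = 0 := by
        have h1' := hbound p.2.2
        have h2' := hbound p.2.1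
        have heq : v.2.2 = (χ₁ p.2.2 * χ₁ p.2.1) * v.2.2 := by
          linear_combination ha + χ₁ p.2.2 * hb
        have hlt : |χ₁ p.2.2 * χ₁ p.2.1| < 1 := by
          rw [abs_mul]
          calc |χ₁ p.2.2| * |χ₁ p.2.1| ≤ |χ₁ p.2.2| * 1 :=
                mul_le_mul_of_nonneg_left h2'.le (abs_nonneg _)
            _ < 1 := by simpa using h1'
        have h0 : (1 - χ₁ p.2.2 * χ₁ p.2.1) * v.2.2 = 0 := by
          linear_combination heq
        rcases mul_eq_zero.mp h0 with h | h
        · exfalso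
          have := abs_lt.mp hlt
          linarith
        · exact h
      have hx : v.2.1 = 0 := by rw [hb, hy, mul_zero]
      have ht : v.1 = 0 := by rw [hc, hy, mul_zero]
      exact Prod.ext ht (Prod.ext hx hy)
    · rintro rfl; simp
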